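/- Let g be a derivator and x₀ ∈ ℝ. For every n ∈ ℕ and x ∈ ℝ: g_n(x) = g_1(x)^n − Σ_{k=1}^{n−1} g_1(x)^{n−1−k} Σ_{j=1}^{k} h_{j,k−j}(x), where h_{1,k}(x) = (k+1) ∫_{x₀}^{x} g_k Δg dμ_g and h_{j+1,k}(x) = (k+j+1) ∫_{x₀}^{x} h_{j,k} dμ_g. -/

import Mathlib

open MeasureTheory Set Finset

/-- The jump of `g` at `x`: `Δg(x) = g(x⁺) − g(x)`. -/
noncomputable def jumpOf (g : ℝ → ℝ) (x : ℝ) : ℝ := Function.rightLim g x - g x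

/-- Oriented Lebesgue–Stieltjes integral: `∫_a^b f dμ = ∫_{[a,b)} f dμ` if `a ≤ b`,
`= −∫_{[b,a)} f dμ` otherwise. -/
noncomputable def ointeg (μ : MeasureTheory.Measure ℝ) (f : ℝ → ℝ) (a b : ℝ) : ℝ :=
  if a ≤ b then ∫ s in Set.Ico a b, f s ∂μ else - ∫ s in Set.Ico b a, f s ∂μ

/-- The `g`-monomials centered at `c`, defined from the Lebesgue–Stieltjes measure `μ` of `g`:
`g_0 ≡ 1`, `g_{n+1}(x) = (n+1) ∫_c^x g_n dμ` (oriented). -/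
noncomputable def gMon (μ : MeasureTheory.Measure ℝ) (c : ℝ) : ℕ → ℝ → ℝ
  | 0 => fun _ => 1
  | n + 1 => fun x => ((n : ℝ) + 1) * ointeg μ (gMon μ c n) c x


/-- The auxiliary iterated integrals: `hAux g μ x₀ (j−1) k` is `h_{j,k}` of the paper, i.e.
`h_{1,k}(x) = (k+1) ∫_{x₀}^x g_k Δg dμ_g` and `h_{j+1,k}(x) = (k+j+1) ∫_{x₀}^x h_{j,k} dμ_g`. -/
noncomputable def hAux (g : ℝ → ℝ) (μ : MeasureTheory.Measure ℝ) (x₀ : ℝ) :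
    ℕ → ℕ → ℝ → ℝ
  | 0, k => fun x => ((k : ℝ) + 1) * ointeg μ (fun s => gMon μ x₀ k s * jumpOf g s) x₀ x
  | j + 1, k => fun x => ((k : ℝ) + (j : ℝ) + 2) * ointeg μ (hAux g μ x₀ j k) x₀ x

/-!
Over `[a, b)²`, Fubini splits `(∫ f dμ)(∫ h dμ)` along the diagonal; the diagonal contributes the
atoms `μ {t} = Δg(t)`. This gives the product rule
`F(x) H(x) = ∫_{x₀}^x (F h + H f + f h Δg) dμ` for `F = ∫_{x₀}^· f dμ` and `H = ∫_{x₀}^· h dμ`.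
With `f = g₀ = 1` and `h = g_n` it becomes `g₁ g_{n+1} = g_{n+2} + Σ_{i+k=n} h_{i+1,k}`, and
unrolling `g_{k+1} = g₁ g_k − Σ_{j=1}^k h_{j,k−j}` gives the formula.
-/

section OrientedIntegral

variable {μ : Measure ℝ} {f h : ℝ → ℝ} {a b c x : ℝ}

lemma ointeg_of_le (hcx : c ≤ x) : ointeg μ f c x = ∫ s in Ico c x, f s ∂μ := if_pos hcx

lemma ointeg_swap : ointeg μ f c x = -ointeg μ f x c := by
  unfold ointeg
  rcases lt_trichotomy c x with hcx | rfl | hxc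
  · rw [if_pos hcx.le, if_neg hcx.not_ge, neg_neg]
  · simp
  · rw [if_neg hxc.not_ge, if_pos hxc.le]

variable (hf : ∀ a b, IntegrableOn f (Ico a b) μ) (hh : ∀ a b, IntegrableOn h (Ico a b) μ)
include hf

lemma ointeg_add_integral_Ico (c : ℝ) (hab : a ≤ b) :
    ointeg μ f c a + ∫ s in Ico a b, f s ∂μ = ointeg μ f c b := by
  have split {p q r : ℝ} (hpq : p ≤ q) (hqr : q ≤ r) :
      ∫ s in Ico p r, f s ∂μ = (∫ s in Ico p q, f s ∂μ) + ∫ s in Ico q r, f s ∂μ := by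
    rw [← Ico_union_Ico_eq_Ico hpq hqr]
    exact setIntegral_union Ico_disjoint_Ico_same measurableSet_Ico (hf p q) (hf q r)
  unfold ointeg
  rcases le_or_gt c a with hca | hac
  · rw [if_pos hca, if_pos (hca.trans hab), split hca hab]
  rcases le_or_gt c b with hcb | hbc
  · rw [if_pos hcb, if_neg hac.not_ge, split hac.le hcb]; ring
  · rw [if_neg hbc.not_ge, if_neg hac.not_ge, split hab hbc.le]; ring

lemma ointeg_add_ointeg (c a b : ℝ) : ointeg μ f c a + ointeg μ f a b = ointeg μ f c b := by
  rcases le_total a b with hab | hba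
  · rw [ointeg_of_le hab, ointeg_add_integral_Ico hf c hab]
  · rw [ointeg_swap (c := a), ointeg_of_le hba, ← ointeg_add_integral_Ico hf c hba]; ring

include hh in
lemma ointeg_add (c x : ℝ) :
    ointeg μ (fun s => f s + h s) c x = ointeg μ f c x + ointeg μ h c x := by
  unfold ointeg
  split_ifs
  · exact integral_add (hf c x) (hh c x)
  · rw [integral_add (hf x c) (hh x c)]; ring

include hh in
lemma ointeg_sub (c x : ℝ) :
    ointeg μ (fun s => f s - h s) c x = ointeg μ f c x - ointeg μ h c x := by
  unfold ointeg
  split_ifs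
  · exact integral_sub (hf c x) (hh c x)
  · rw [integral_sub (hf x c) (hh x c)]; ring

omit hf in
lemma ointeg_const_mul (r c x : ℝ) : ointeg μ (fun s => r * f s) c x = r * ointeg μ f c x := by
  unfold ointeg
  split_ifs
  · exact integral_const_mul r _
  · rw [integral_const_mul]; ring

omit hf in
lemma ointeg_finsetSum {ι : Type*} (t : Finset ι) {F : ι → ℝ → ℝ}
    (hF : ∀ i ∈ t, ∀ a b, IntegrableOn (F i) (Ico a b) μ) (c x : ℝ) :
    ointeg μ (fun s => ∑ i ∈ t, F i s) c x = ∑ i ∈ t, ointeg μ (F i) c x := by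
  unfold ointeg
  split_ifs
  · exact integral_finsetSum t fun i hi => hF i hi c x
  · rw [integral_finsetSum t fun i hi => hF i hi x c, Finset.sum_neg_distrib]

lemma monotone_ointeg (hf0 : 0 ≤ f) (c : ℝ) : Monotone (ointeg μ f c) := fun u v huv => by
  rw [← ointeg_add_integral_Ico hf c huv]
  exact le_add_of_nonneg_right (setIntegral_nonneg measurableSet_Ico fun s _ => hf0 s)

lemma measurable_ointeg (c : ℝ) : Measurable (ointeg μ f c) := by
  have hpos : ∀ a b, IntegrableOn (fun s => max (f s) 0) (Ico a b) μ := fun a b => (hf a b).pos_part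
  have hneg : ∀ a b, IntegrableOn (fun s => max (-f s) 0) (Ico a b) μ :=
    fun a b => (hf a b).neg_part
  have hdecomp : ointeg μ f c = fun x =>
      ointeg μ (fun s => max (f s) 0) c x - ointeg μ (fun s => max (-f s) 0) c x := by
    ext x
    rw [← ointeg_sub hpos hneg]
    simp only [max_zero_sub_max_neg_zero_eq_self]
  rw [hdecomp]
  exact (monotone_ointeg hpos (fun s => le_max_right _ _) c).measurable.sub
    (monotone_ointeg hneg (fun s => le_max_right _ _) c).measurable

end OrientedIntegral

/-- Boundedness on bounded intervals, rather than local integrability, makes this class closed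
under products. -/
def locBddMeasurable : Subalgebra ℝ (ℝ → ℝ) where
  carrier := {f | Measurable f ∧ ∀ a b, ∃ C, ∀ s ∈ Set.Ico a b, |f s| ≤ C}
  mul_mem' := by
    rintro f h ⟨hfm, hfb⟩ ⟨hhm, hhb⟩
    refine ⟨hfm.mul hhm, fun a b => ?_⟩
    obtain ⟨C, hC⟩ := hfb a b
    obtain ⟨D, hD⟩ := hhb a b
    refine ⟨C * D, fun s hs => ?_⟩
    rw [Pi.mul_apply, abs_mul]
    exact mul_le_mul (hC s hs) (hD s hs) (abs_nonneg _) ((abs_nonneg _).trans (hC s hs))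
  add_mem' := by
    rintro f h ⟨hfm, hfb⟩ ⟨hhm, hhb⟩
    refine ⟨hfm.add hhm, fun a b => ?_⟩
    obtain ⟨C, hC⟩ := hfb a b
    obtain ⟨D, hD⟩ := hhb a b
    exact ⟨C + D, fun s hs => (abs_add_le _ _).trans (add_le_add (hC s hs) (hD s hs))⟩
  algebraMap_mem' r := ⟨measurable_const, fun _ _ => ⟨|r|, fun _ _ => le_rfl⟩⟩

lemma const_mul_mem_locBddMeasurable {f : ℝ → ℝ} (hf : f ∈ locBddMeasurable) (r : ℝ) :
    (fun s => r * f s) ∈ locBddMeasurable :=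
  mul_mem (algebraMap_mem locBddMeasurable r) hf

lemma jumpOf_nonneg {g : ℝ → ℝ} (hg : Monotone g) (s : ℝ) : 0 ≤ jumpOf g s :=
  sub_nonneg.2 (hg.le_rightLim le_rfl)

lemma jumpOf_mem_locBddMeasurable {g : ℝ → ℝ} (hg : Monotone g) :
    jumpOf g ∈ locBddMeasurable := by
  refine ⟨hg.rightLim.measurable.sub hg.measurable, fun a b => ⟨g b - g a, fun s hs => ?_⟩⟩
  rw [abs_of_nonneg (jumpOf_nonneg hg s), jumpOf]
  exact sub_le_sub (hg.rightLim_le hs.2) (hg hs.1)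

lemma isLocallyFiniteMeasure_of_measure_Ico_ne_top {μ : Measure ℝ}
    (h : ∀ a b, μ (Ico a b) ≠ ⊤) : IsLocallyFiniteMeasure μ :=
  ⟨fun x => ⟨Ico (x - 1) (x + 1), Ico_mem_nhds (by linarith) (by linarith), (h _ _).lt_top⟩⟩

section LocallyFinite

variable {μ : Measure ℝ} [IsLocallyFiniteMeasure μ] {f h : ℝ → ℝ}

lemma integrableOn_Ico_of_mem (hf : f ∈ locBddMeasurable) (a b : ℝ) :
    IntegrableOn f (Ico a b) μ := by
  obtain ⟨C, hC⟩ := hf.2 a b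
  exact Measure.integrableOn_of_bounded measure_Ico_lt_top.ne hf.1.aestronglyMeasurable (M := C)
    (ae_restrict_of_forall_mem measurableSet_Ico fun s hs =>
      (Real.norm_eq_abs _).trans_le (hC s hs))

lemma ointeg_mem_locBddMeasurable (hf : f ∈ locBddMeasurable) (c : ℝ) :
    ointeg μ f c ∈ locBddMeasurable := by
  refine ⟨measurable_ointeg (integrableOn_Ico_of_mem hf) c, fun a b => ?_⟩
  obtain ⟨C, hC⟩ := hf.2 a b
  refine ⟨|ointeg μ f c a| + max C 0 * μ.real (Ico a b), fun s hs => ?_⟩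
  rw [← ointeg_add_integral_Ico (integrableOn_Ico_of_mem hf) c hs.1]
  refine (abs_add_le _ _).trans (add_le_add_right ?_ _)
  calc |∫ t in Ico a s, f t ∂μ| ≤ max C 0 * μ.real (Ico a s) :=
        norm_setIntegral_le_of_norm_le_const (f := f) measure_Ico_lt_top fun t ht =>
          (hC t ⟨ht.1, ht.2.trans hs.2⟩).trans (le_max_left _ _)
    _ ≤ max C 0 * μ.real (Ico a b) :=
        mul_le_mul_of_nonneg_left
          (measureReal_mono (Ico_subset_Ico_right hs.2.le) measure_Ico_lt_top.ne)
          (le_max_right _ _)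

lemma setIntegral_Icc_eq_add_measureReal {a t : ℝ} (hf : f ∈ locBddMeasurable) (hat : a ≤ t) :
    ∫ s in Icc a t, f s ∂μ = ∫ s in Ico a t, f s ∂μ + μ.real {t} * f t := by
  have hint : IntegrableOn f (Icc a t) μ :=
    (integrableOn_Ico_of_mem hf a (t + 1)).mono_set (Icc_subset_Ico_right (lt_add_one t))
  rw [← Ico_union_right hat, setIntegral_union (disjoint_singleton_right.2 fun ht => ht.2.false)
    (measurableSet_singleton t) (hint.mono_set Ico_subset_Icc_self)
    (hint.mono_set (singleton_subset_iff.2 (right_mem_Icc.2 hat))), integral_singleton,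
    smul_eq_mul]

end LocallyFinite

lemma integral_mul_integral_eq_add {ν : Measure ℝ} [SFinite ν] {f h : ℝ → ℝ}
    (hf : Integrable f ν) (hh : Integrable h ν) :
    (∫ s, f s ∂ν) * ∫ t, h t ∂ν =
      (∫ s, f s * ∫ t in Iio s, h t ∂ν ∂ν) + ∫ t, h t * ∫ s in Iic t, f s ∂ν ∂ν := by
  set D := {z : ℝ × ℝ | z.2 < z.1}
  have hD : MeasurableSet D := measurableSet_lt measurable_snd measurable_fst
  have hφ : Integrable (fun z : ℝ × ℝ => f z.1 * h z.2) (ν.prod ν) := hf.mul_prod hh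
  rw [← integral_prod_mul, ← integral_add_compl hD hφ, ← integral_indicator hD,
    ← integral_indicator hD.compl, integral_prod _ (hφ.indicator hD),
    integral_prod_symm _ (hφ.indicator hD.compl)]
  congr 1
  · refine integral_congr_ae (ae_of_all _ fun s => ?_)
    dsimp only
    rw [← integral_indicator measurableSet_Iio, ← integral_const_mul]
    congr 1 with t
    by_cases hts : t < s <;> simp [D, indicator, hts]
  · refine integral_congr_ae (ae_of_all _ fun t => ?_)
    dsimp only
    rw [← integral_indicator measurableSet_Iic, ← integral_const_mul]
    congr 1 with s
    by_cases hst : s ≤ t <;> simp [D, indicator, hst, mul_comm]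

lemma integral_Ico_mul_integral_Ico {μ : Measure ℝ} [IsLocallyFiniteMeasure μ] {f h : ℝ → ℝ}
    (hf : f ∈ locBddMeasurable) (hh : h ∈ locBddMeasurable) (a b : ℝ) :
    (∫ s in Ico a b, f s ∂μ) * ∫ t in Ico a b, h t ∂μ =
      (∫ s in Ico a b, f s * ointeg μ h a s ∂μ) +
        ∫ t in Ico a b, h t * ∫ s in Icc a t, f s ∂μ ∂μ := by
  rw [integral_mul_integral_eq_add (integrableOn_Ico_of_mem hf a b)
    (integrableOn_Ico_of_mem hh a b)]
  congr 1
  · refine setIntegral_congr_fun measurableSet_Ico fun s hs => ?_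
    rw [Measure.restrict_restrict measurableSet_Iio, ointeg_of_le hs.1]
    congr 3
    ext t
    simp only [Set.mem_inter_iff, Set.mem_Iio, Set.mem_Ico]
    exact ⟨fun ht => ⟨ht.2.1, ht.1⟩, fun ht => ⟨ht.2, ht.1, ht.2.trans hs.2⟩⟩
  · refine setIntegral_congr_fun measurableSet_Ico fun t ht => ?_
    rw [Measure.restrict_restrict measurableSet_Iic]
    congr 3
    ext s
    simp only [Set.mem_inter_iff, Set.mem_Iic, Set.mem_Ico, Set.mem_Icc]
    exact ⟨fun hs => ⟨hs.2.1, hs.1⟩, fun hs => ⟨hs.2, hs.1, hs.2.trans_lt ht.2⟩⟩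

section ProductRule

variable {μ : Measure ℝ} [IsLocallyFiniteMeasure μ] {g f h : ℝ → ℝ} (hg : Monotone g)
  (hjump : ∀ s, μ.real {s} = jumpOf g s)
  (hf : f ∈ locBddMeasurable) (hh : h ∈ locBddMeasurable)
include hg hjump hf hh

lemma integral_Ico_mul_integral_Ico_eq_ointeg {a b : ℝ} (hab : a ≤ b) :
    (∫ s in Ico a b, f s ∂μ) * ∫ s in Ico a b, h s ∂μ =
      ointeg μ (fun t => ointeg μ f a t * h t + ointeg μ h a t * f t + f t * h t * jumpOf g t)
        a b := by
  have hint {p : ℝ → ℝ} (hp : p ∈ locBddMeasurable) : IntegrableOn p (Ico a b) μ :=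
    integrableOn_Ico_of_mem hp a b
  have hFa := ointeg_mem_locBddMeasurable (μ := μ) hf a
  have hHa := ointeg_mem_locBddMeasurable (μ := μ) hh a
  have hΔ := jumpOf_mem_locBddMeasurable hg
  have hIcc : ∀ t ∈ Ico a b,
      h t * ∫ s in Icc a t, f s ∂μ = ointeg μ f a t * h t + f t * h t * jumpOf g t :=
    fun t ht => by rw [setIntegral_Icc_eq_add_measureReal hf ht.1, ← ointeg_of_le ht.1, hjump]; ring
  rw [integral_Ico_mul_integral_Ico hf hh, setIntegral_congr_fun measurableSet_Ico hIcc,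
    ← integral_add (hint (p := fun t => f t * ointeg μ h a t) (mul_mem hf hHa))
      (hint (p := fun t => ointeg μ f a t * h t + f t * h t * jumpOf g t)
        (add_mem (mul_mem hFa hh) (mul_mem (mul_mem hf hh) hΔ))),
    ointeg_of_le hab]
  exact setIntegral_congr_fun measurableSet_Ico fun t _ => by ring

lemma ointeg_mul_ointeg (c x : ℝ) :
    ointeg μ f c x * ointeg μ h c x =
      ointeg μ (fun t => ointeg μ f c t * h t + ointeg μ h c t * f t + f t * h t * jumpOf g t)
        c x := by
  rcases le_or_gt c x with hcx | hxc
  · rw [ointeg_of_le hcx, ointeg_of_le hcx]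
    exact integral_Ico_mul_integral_Ico_eq_ointeg hg hjump hf hh hcx
  -- Move the base point to `x`, where `[x, c)` is positively oriented.
  have hfi := integrableOn_Ico_of_mem (μ := μ) hf
  have hhi := integrableOn_Ico_of_mem (μ := μ) hh
  have base := integral_Ico_mul_integral_Ico_eq_ointeg hg hjump hf hh hxc.le
  rw [← ointeg_of_le hxc.le, ← ointeg_of_le hxc.le] at base
  have hshift : (fun t => ointeg μ f c t * h t + ointeg μ h c t * f t + f t * h t * jumpOf g t) =
      fun t => (ointeg μ f x t * h t + ointeg μ h x t * f t + f t * h t * jumpOf g t) -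
        (ointeg μ f x c * h t + ointeg μ h x c * f t) := by
    ext t
    rw [← ointeg_add_ointeg hfi x c t, ← ointeg_add_ointeg hhi x c t]
    ring
  have hP : (fun t => ointeg μ f x t * h t + ointeg μ h x t * f t + f t * h t * jumpOf g t) ∈
      locBddMeasurable :=
    add_mem (add_mem (mul_mem (ointeg_mem_locBddMeasurable hf x) hh)
      (mul_mem (ointeg_mem_locBddMeasurable hh x) hf))
      (mul_mem (mul_mem hf hh) (jumpOf_mem_locBddMeasurable hg))
  have hlin : ointeg μ (fun t => (ointeg μ f x t * h t + ointeg μ h x t * f t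
        + f t * h t * jumpOf g t) - (ointeg μ f x c * h t + ointeg μ h x c * f t)) x c =
      ointeg μ f x c * ointeg μ h x c - (ointeg μ f x c * ointeg μ h x c +
        ointeg μ h x c * ointeg μ f x c) := by
    have hcorr : ∀ a b, IntegrableOn (fun t => ointeg μ f x c * h t + ointeg μ h x c * f t)
        (Ico a b) μ := fun a b => ((hhi a b).const_mul _).add ((hfi a b).const_mul _)
    rw [ointeg_sub (integrableOn_Ico_of_mem hP) hcorr,
      ointeg_add (fun a b => (hhi a b).const_mul _) (fun a b => (hfi a b).const_mul _),
      ointeg_const_mul, ointeg_const_mul, base]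
  rw [ointeg_swap (f := f) (c := c), ointeg_swap (f := h) (c := c), hshift,
    ointeg_swap (c := c), hlin]
  ring

end ProductRule

section Stieltjes

variable {μ : Measure ℝ} {g : ℝ → ℝ}
  (hμ : ∀ a b : ℝ, a ≤ b → μ (Set.Ico a b) = ENNReal.ofReal (g b - g a))
include hμ

lemma measure_Ico_ne_top_of_eq_ofReal (a b : ℝ) : μ (Ico a b) ≠ ⊤ := by
  rcases le_or_gt a b with hab | hba
  · rw [hμ a b hab]
    exact ENNReal.ofReal_ne_top
  · rw [Ico_eq_empty hba.not_gt, measure_empty]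
    exact ENNReal.zero_ne_top

lemma measure_singleton_eq_ofReal_jumpOf (hg : Monotone g) (s : ℝ) :
    μ {s} = ENNReal.ofReal (jumpOf g s) := by
  have hinter : ⋂ t > s, Ico s t = {s} := by
    ext y
    simp only [Set.mem_iInter, Set.mem_Ico, Set.mem_singleton_iff]
    refine ⟨fun hy => le_antisymm (le_of_not_gt fun hsy => (hy y hsy).2.false)
      (hy (s + 1) (lt_add_one s)).1, fun hy t ht => ⟨hy.ge, hy ▸ ht⟩⟩
  have hlim := tendsto_measure_biInter_gt (μ := μ) (s := fun t => Ico s t)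
    (fun t _ => measurableSet_Ico.nullMeasurableSet) (fun t u _ htu => Ico_subset_Ico_right htu)
    ⟨s + 1, lt_add_one s, measure_Ico_ne_top_of_eq_ofReal hμ s (s + 1)⟩
  rw [hinter] at hlim
  have hjump : Filter.Tendsto (fun t => ENNReal.ofReal (g t - g s)) (nhdsWithin s (Ioi s))
      (nhds (ENNReal.ofReal (jumpOf g s))) :=
    (ENNReal.continuous_ofReal.tendsto _).comp ((hg.tendsto_rightLim s).sub_const (g s))
  exact tendsto_nhds_unique hlim (hjump.congr' (eventually_nhdsWithin_of_forall fun t ht =>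
    (hμ s t (le_of_lt ht)).symm))

lemma measureReal_singleton_eq_jumpOf (hg : Monotone g) (s : ℝ) : μ.real {s} = jumpOf g s := by
  rw [measureReal_def, measure_singleton_eq_ofReal_jumpOf hμ hg,
    ENNReal.toReal_ofReal (jumpOf_nonneg hg s)]

end Stieltjes

section Monomials

variable {μ : Measure ℝ} {g : ℝ → ℝ} {x₀ : ℝ}

lemma gMon_zero (x : ℝ) : gMon μ x₀ 0 x = 1 := rfl

lemma ointeg_gMon (n : ℕ) (x : ℝ) :
    ointeg μ (gMon μ x₀ n) x₀ x = gMon μ x₀ (n + 1) x / (n + 1) := by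
  rw [gMon, mul_div_cancel_left₀ _ (Nat.cast_add_one_ne_zero n)]

lemma ointeg_gMon_zero (x : ℝ) : ointeg μ (gMon μ x₀ 0) x₀ x = gMon μ x₀ 1 x := by
  simp [gMon]

lemma ointeg_gMon_mul_jumpOf (n : ℕ) (x : ℝ) :
    ointeg μ (fun s => gMon μ x₀ n s * jumpOf g s) x₀ x = hAux g μ x₀ 0 n x / (n + 1) := by
  rw [hAux, mul_div_cancel_left₀ _ (Nat.cast_add_one_ne_zero n)]

lemma ointeg_hAux (j k : ℕ) (x : ℝ) :
    ointeg μ (hAux g μ x₀ j k) x₀ x = hAux g μ x₀ (j + 1) k x / (k + j + 2) := by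
  rw [hAux, mul_div_cancel_left₀ _ (by positivity)]

variable [IsLocallyFiniteMeasure μ]

lemma gMon_mem_locBddMeasurable (n : ℕ) : gMon μ x₀ n ∈ locBddMeasurable := by
  induction n with
  | zero => exact one_mem _
  | succ n ih => exact const_mul_mem_locBddMeasurable (ointeg_mem_locBddMeasurable ih x₀) _

lemma hAux_mem_locBddMeasurable (hg : Monotone g) (j k : ℕ) :
    hAux g μ x₀ j k ∈ locBddMeasurable := by
  induction j with
  | zero => exact const_mul_mem_locBddMeasurable (ointeg_mem_locBddMeasurable
      (mul_mem (gMon_mem_locBddMeasurable k) (jumpOf_mem_locBddMeasurable hg)) x₀) _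
  | succ j ih => exact const_mul_mem_locBddMeasurable (ointeg_mem_locBddMeasurable ih x₀) _

variable (hg : Monotone g) (hjump : ∀ s, μ.real {s} = jumpOf g s)
include hg hjump

lemma gMon_one_mul_gMon_succ_of_eq (n : ℕ) {S : ℝ → ℝ} (hS : S ∈ locBddMeasurable)
    (hn : ∀ t, gMon μ x₀ 1 t * gMon μ x₀ n t = gMon μ x₀ (n + 1) t + S t) (x : ℝ) :
    gMon μ x₀ 1 x * gMon μ x₀ (n + 1) x =
      gMon μ x₀ (n + 2) x + ((n + 1) * ointeg μ S x₀ x + hAux g μ x₀ 0 n x) := by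
  have hG := gMon_mem_locBddMeasurable (μ := μ) (x₀ := x₀)
  have hint {p : ℝ → ℝ} (hp : p ∈ locBddMeasurable) := integrableOn_Ico_of_mem (μ := μ) hp
  have hprod := ointeg_mul_ointeg hg hjump (hG 0) (hG n) x₀ x
  have hintegrand : (fun t => ointeg μ (gMon μ x₀ 0) x₀ t * gMon μ x₀ n t +
        ointeg μ (gMon μ x₀ n) x₀ t * gMon μ x₀ 0 t + gMon μ x₀ 0 t * gMon μ x₀ n t * jumpOf g t) =
      fun t => (n + 2) / (n + 1) * gMon μ x₀ (n + 1) t + (S t + gMon μ x₀ n t * jumpOf g t) := by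
    ext t
    rw [ointeg_gMon_zero, ointeg_gMon, gMon_zero, hn]
    field_simp
    ring
  rw [hintegrand, ointeg_add (hint (const_mul_mem_locBddMeasurable (hG (n + 1)) _))
      (hint (p := fun t => S t + gMon μ x₀ n t * jumpOf g t)
        (add_mem hS (mul_mem (hG n) (jumpOf_mem_locBddMeasurable hg)))),
    ointeg_add (hint hS) (hint (p := fun t => gMon μ x₀ n t * jumpOf g t)
      (mul_mem (hG n) (jumpOf_mem_locBddMeasurable hg))),
    ointeg_const_mul, ointeg_gMon_zero, ointeg_gMon, ointeg_gMon, ointeg_gMon_mul_jumpOf] at hprod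
  push_cast at hprod
  field_simp at hprod
  apply mul_left_cancel₀ (show (n : ℝ) + 2 ≠ 0 by positivity)
  linear_combination hprod

lemma gMon_one_mul_gMon_succ (n : ℕ) (x : ℝ) :
    gMon μ x₀ 1 x * gMon μ x₀ (n + 1) x =
      gMon μ x₀ (n + 2) x + ∑ p ∈ antidiagonal n, hAux g μ x₀ p.1 p.2 x := by
  induction n generalizing x with
  | zero =>
    have h0 := gMon_one_mul_gMon_succ_of_eq (x₀ := x₀) hg hjump 0 (S := 0) (zero_mem _)
      (fun t => by rw [gMon_zero, mul_one, Pi.zero_apply, add_zero]) x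
    simpa [ointeg] using h0
  | succ n ih =>
    have hS : (fun t => ∑ p ∈ antidiagonal n, hAux g μ x₀ p.1 p.2 t) ∈ locBddMeasurable := by
      rw [← Finset.sum_fn]
      exact sum_mem fun p _ => hAux_mem_locBddMeasurable hg p.1 p.2
    rw [gMon_one_mul_gMon_succ_of_eq hg hjump (n + 1) hS ih x, Nat.sum_antidiagonal_succ,
      ointeg_finsetSum _ fun p _ => integrableOn_Ico_of_mem (hAux_mem_locBddMeasurable hg p.1 p.2),
      Finset.mul_sum, add_comm (hAux g μ x₀ 0 (n + 1) x)]
    congr 2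
    refine Finset.sum_congr rfl fun p hp => ?_
    rw [ointeg_hAux, ← Finset.HasAntidiagonal.mem_antidiagonal.1 hp]
    push_cast
    field_simp
    ring

end Monomials

lemma eq_pow_sub_sum_of_succ_eq_mul_sub {R : Type*} [CommRing R] {G S : ℕ → R} {y : R}
    (h0 : G 0 = 1) (hG : ∀ k, G (k + 1) = y * G k - S k) (n : ℕ) :
    G n = y ^ n - ∑ k ∈ range n, y ^ (n - 1 - k) * S k := by
  induction n with
  | zero => simp [h0]
  | succ n ih =>
    have hshift : ∀ k ∈ range n, y * (y ^ (n - 1 - k) * S k) = y ^ (n - k) * S k := by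
      intro k hk
      rw [← mul_assoc, ← pow_succ']
      congr 2
      have := mem_range.1 hk
      omega
    rw [hG, ih, sum_range_succ, mul_sub, mul_sum, sum_congr rfl hshift, Nat.add_sub_cancel,
      Nat.sub_self, pow_zero, one_mul, pow_succ']
    ring

lemma sum_range_eq_sum_Icc_of_eq_zero {M : Type*} [AddCommMonoid M] {f : ℕ → M} (h0 : f 0 = 0)
    (n : ℕ) : ∑ k ∈ range n, f k = ∑ k ∈ Icc 1 (n - 1), f k := by
  rcases n with _ | m
  · rfl
  · rw [range_eq_Ico, sum_eq_sum_Ico_succ_bot (Nat.succ_pos m), h0, zero_add, Nat.add_sub_cancel]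
    rfl

lemma sum_Icc_one_eq_sum_antidiagonal {M : Type*} [AddCommMonoid M] (F : ℕ → ℕ → M) (m : ℕ) :
    ∑ j ∈ Icc 1 (m + 1), F (j - 1) (m + 1 - j) = ∑ p ∈ antidiagonal m, F p.1 p.2 := by
  rw [Nat.sum_antidiagonal_eq_sum_range_succ F, ← Finset.Ico_add_one_right_eq_Icc,
    sum_Ico_eq_sum_range]
  refine sum_congr rfl fun k hk => ?_
  congr 1 <;> omega

theorem stmt13_general (g : ℝ → ℝ) (μ : MeasureTheory.Measure ℝ) (x₀ : ℝ)
    (hg : Monotone g)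
    (hμ : ∀ a b : ℝ, a ≤ b → μ (Set.Ico a b) = ENNReal.ofReal (g b - g a)) :
    ∀ n : ℕ, ∀ x : ℝ,
      gMon μ x₀ n x = (gMon μ x₀ 1 x) ^ n -
        ∑ k ∈ Finset.Icc 1 (n - 1), (gMon μ x₀ 1 x) ^ (n - 1 - k) *
          ∑ j ∈ Finset.Icc 1 k, hAux g μ x₀ (j - 1) (k - j) x := by
  have := isLocallyFiniteMeasure_of_measure_Ico_ne_top (measure_Ico_ne_top_of_eq_ofReal hμ)
  intro n x
  have hrec : ∀ k, gMon μ x₀ (k + 1) x =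
      gMon μ x₀ 1 x * gMon μ x₀ k x - ∑ j ∈ Icc 1 k, hAux g μ x₀ (j - 1) (k - j) x := by
    rintro (_ | m)
    · simp [gMon_zero]
    · rw [sum_Icc_one_eq_sum_antidiagonal (fun i j => hAux g μ x₀ i j x),
        gMon_one_mul_gMon_succ hg (measureReal_singleton_eq_jumpOf hμ hg)]
      ring
  rw [eq_pow_sub_sum_of_succ_eq_mul_sub (G := fun k => gMon μ x₀ k x) rfl hrec n,
    sum_range_eq_sum_Icc_of_eq_zero (by simp)]

/-- For every `n` and `x`:
`g_n(x) = g_1(x)^n − Σ_{k=1}^{n−1} g_1(x)^{n−1−k} Σ_{j=1}^{k} h_{j,k−j}(x)`. -/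
theorem stmt13 (g : ℝ → ℝ) (μ : MeasureTheory.Measure ℝ) (x₀ : ℝ)
    (hg : Monotone g) (hlc : ∀ x : ℝ, ContinuousWithinAt g (Set.Iio x) x)
    (hμ : ∀ a b : ℝ, a ≤ b → μ (Set.Ico a b) = ENNReal.ofReal (g b - g a)) :
    ∀ n : ℕ, ∀ x : ℝ,
      gMon μ x₀ n x = (gMon μ x₀ 1 x) ^ n -
        ∑ k ∈ Finset.Icc 1 (n - 1), (gMon μ x₀ 1 x) ^ (n - 1 - k) *
          ∑ j ∈ Finset.Icc 1 k, hAux g μ x₀ (j - 1) (k - j) x :=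
  stmt13_general g μ x₀ hg hμ
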